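/- Let k ≥ 2 be a power of 2, let n, m be positive integers, and let p ∈ (0,1] satisfy m·p^(log k − 1) > 30 and p < 1/30. Let s ∈ {0,1}^k with s ≠ 0^k and let σ = stex(s). Then for all tuples ℓ, ℓ' ∈ [n]^k with δ(ℓ,ℓ') = s: E[C_ℓ · C_{ℓ'}] ≤ (p^(k+σ+1) / (m·p^(log k + 1))²) · [(1 − p)^(−1)·(1 + 30/(m·p^(log k)))]^(k+σ+1). -/

import Mathlib

/-- `⟨s⟩`: the set of integers `{-⌊s/2⌋, …, ⌊s/2⌋}`. -/
noncomputable def intRange (s : ℝ) : Finset ℤ := Finset.Icc (-⌊s / 2⌋) ⌊s / 2⌋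

/-- A tuple `ℓ ∈ [n]^k` (with `k = 2^κ`) is *successful* for the lists `L` and filtering
parameter `p` if every partial block sum at level `d ∈ {1,…,κ}` lies in `⟨m·p^d⟩`, and the
total sum is `0`. -/
def Successful (κ n m : ℕ) (p : ℝ) (L : Fin (2 ^ κ) → Fin n → ℤ)
    (ℓ : Fin (2 ^ κ) → Fin n) : Prop :=
  (∀ d ∈ Finset.Icc 1 κ, ∀ i < 2 ^ (κ - d),
      (∑ j : Fin (2 ^ κ),
          if i * 2 ^ d ≤ (j : ℕ) ∧ (j : ℕ) < (i + 1) * 2 ^ d then L j (ℓ j) else 0)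
        ∈ intRange ((m : ℝ) * p ^ d)) ∧
    (∑ j : Fin (2 ^ κ), L j (ℓ j)) = 0

/-- `E[C_ℓ · C_ℓ']`: the probability (over the uniformly random lists) that both tuples
`ℓ` and `ℓ'` are successful, i.e. the expectation of the product of the two indicators. -/
noncomputable def expPair (κ n m : ℕ) (p : ℝ) (ℓ ℓ' : Fin (2 ^ κ) → Fin n) : ℝ :=
  (Nat.card {L : Fin (2 ^ κ) → Fin n → ↥(intRange (m : ℝ)) //
      Successful κ n m p (fun i j => (L i j : ℤ)) ℓ ∧
        Successful κ n m p (fun i j => (L i j : ℤ)) ℓ'} : ℝ) /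
    (Fintype.card (Fin (2 ^ κ) → Fin n → ↥(intRange (m : ℝ))) : ℝ)

/-- `stex s = Σ_{d=1}^{κ} Σ_i s^d_i`, where `s^d_i` is the max (i.e. the OR) of the bits of
`s` over the `i`-th block of size `2^d`. -/
def stex (κ : ℕ) (s : Fin (2 ^ κ) → Bool) : ℕ :=
  ∑ d ∈ Finset.Icc 1 κ, ∑ i ∈ Finset.range (2 ^ (κ - d)),
    if ∃ j : Fin (2 ^ κ), i * 2 ^ d ≤ (j : ℕ) ∧ (j : ℕ) < (i + 1) * 2 ^ d ∧ s j = true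
    then 1 else 0

/-!
Write `x j = L_j[ℓ_j]` and `y j = L_j[ℓ'_j]`. They agree where `s j = 0`, and the entries of `L`
read by neither tuple are unconstrained, so it suffices to count the pairs `(x, y)` that pass the
filters of both tuples. On a block of level `d + 1` such a pair is the sum of its restrictions to
the two halves, which are again solutions; once the block sums of the whole block are fixed, those
of the halves are fixed by the left half. Its `x`-sum takes at most `|⟨m p^d⟩|` values, and its
`y`-sum is determined by the `x`-sum unless both halves contain a position where `ℓ` and `ℓ'`
differ, in which case it gives a second such factor. Multiplying over the tree and counting the
factors against `2^κ + #s` and `stex s`, using `|⟨m p^d⟩| ≤ (1 + 30 / (m p^κ)) m p^d`, gives the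
bound.
-/

open Finset

namespace KTree

lemma zero_mem_intRange {r : ℝ} (hr : 0 ≤ r) : (0 : ℤ) ∈ intRange r := by
  rw [intRange, mem_Icc]
  have : (0 : ℤ) ≤ ⌊r / 2⌋ := Int.floor_nonneg.mpr (by positivity)
  omega

lemma natCast_card_intRange {r : ℝ} (hr : 0 ≤ r) :
    ((#(intRange r) : ℕ) : ℤ) = 2 * ⌊r / 2⌋ + 1 := by
  have : (0 : ℤ) ≤ ⌊r / 2⌋ := Int.floor_nonneg.mpr (by positivity)
  rw [intRange, Int.card_Icc, Int.toNat_of_nonneg (by omega)]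
  ring

lemma card_intRange_le {r : ℝ} (hr : 0 ≤ r) : (#(intRange r) : ℝ) ≤ r + 1 := by
  have h := congrArg (fun z : ℤ => (z : ℝ)) (natCast_card_intRange hr)
  push_cast at h
  rw [h]
  linarith [Int.floor_le (r / 2)]

lemma le_card_intRange (m : ℕ) : m ≤ #(intRange m) := by
  have h := natCast_card_intRange (Nat.cast_nonneg m : (0 : ℝ) ≤ m)
  have hlt := Int.lt_floor_add_one ((m : ℝ) / 2)
  have : (m : ℤ) < 2 * ⌊(m : ℝ) / 2⌋ + 2 := by
    have : ((m : ℤ) : ℝ) < 2 * ⌊(m : ℝ) / 2⌋ + 2 := by push_cast; linarith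
    exact_mod_cast this
  omega

lemma card_intRange_mul_pow_le {m : ℕ} {p C : ℝ} (hm : 0 < m) (hp0 : 0 < p) (hp1 : p ≤ 1)
    (hC : 1 ≤ C) {e κ : ℕ} (he : e ≤ κ) :
    (#(intRange (m * p ^ e)) : ℝ) ≤ (1 + C / (m * p ^ κ)) * m * p ^ e := by
  have hmκ : (0 : ℝ) < m * p ^ κ := by positivity
  have hκe : (m : ℝ) * p ^ κ ≤ m * p ^ e :=
    mul_le_mul_of_nonneg_left (pow_le_pow_of_le_one hp0.le hp1 he) (Nat.cast_nonneg m)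
  have h1 : 1 ≤ C / (m * p ^ κ) * (m * p ^ e) := by
    rw [div_mul_eq_mul_div, le_div_iff₀ hmκ]
    nlinarith
  calc (#(intRange (m * p ^ e)) : ℝ) ≤ m * p ^ e + 1 := card_intRange_le (by positivity)
    _ ≤ (1 + C / (m * p ^ κ)) * m * p ^ e := by linarith

section Blocks

variable {κ : ℕ} {M : Type*} [AddCommMonoid M]

def InBlock (d i j : ℕ) : Prop := i * 2 ^ d ≤ j ∧ j < (i + 1) * 2 ^ d

instance (d i j : ℕ) : Decidable (InBlock d i j) := inferInstanceAs (Decidable (_ ∧ _))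

lemma inBlock_disjoint {d i j : ℕ} : ¬ (InBlock d (2 * i) j ∧ InBlock d (2 * i + 1) j) := by
  simp only [InBlock]
  have : (2 * i + 1) * 2 ^ d = 2 * i * 2 ^ d + 2 ^ d := by ring
  omega

lemma inBlock_succ_iff {d i j : ℕ} :
    InBlock (d + 1) i j ↔ InBlock d (2 * i) j ∨ InBlock d (2 * i + 1) j := by
  simp only [InBlock]
  have h1 : i * 2 ^ (d + 1) = 2 * i * 2 ^ d := by ring
  have h2 : (i + 1) * 2 ^ (d + 1) = (2 * i + 1) * 2 ^ d + 2 ^ d := by ring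
  have h3 : (2 * i + 1) * 2 ^ d = 2 * i * 2 ^ d + 2 ^ d := by ring
  have h4 : (2 * i + 1 + 1) * 2 ^ d = (2 * i + 1) * 2 ^ d + 2 ^ d := by ring
  omega

lemma inBlock_zero_iff {i j : ℕ} : InBlock 0 i j ↔ j = i := by
  simp only [InBlock, pow_zero, mul_one]
  omega

lemma inBlock_one_left (i : ℕ) : InBlock 1 i (2 * i) := by
  unfold InBlock
  omega

lemma inBlock_one_right (i : ℕ) : InBlock 1 i (2 * i + 1) := by
  unfold InBlock
  omega

lemma InBlock.trans {d e i i' j : ℕ} (he : e ≤ d) (hi' : InBlock (d - e) i i')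
    (hj : InBlock e i' j) : InBlock d i j := by
  obtain ⟨k, rfl⟩ := Nat.exists_eq_add_of_le he
  rw [Nat.add_sub_cancel_left] at hi'
  simp only [InBlock] at *
  have h1 : i * 2 ^ (e + k) = i * 2 ^ k * 2 ^ e := by ring
  have h2 : (i + 1) * 2 ^ (e + k) = (i + 1) * 2 ^ k * 2 ^ e := by ring
  constructor
  · rw [h1]
    exact (Nat.mul_le_mul_right _ hi'.1).trans hj.1
  · rw [h2]
    exact hj.2.trans_le (Nat.mul_le_mul_right _ hi'.2)

lemma inBlock_top {j : Fin (2 ^ κ)} : InBlock κ 0 j := by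
  simp only [InBlock, zero_mul, zero_add, one_mul]
  exact ⟨Nat.zero_le _, j.isLt⟩

def blockSum (v : Fin (2 ^ κ) → M) (d i : ℕ) : M :=
  ∑ j : Fin (2 ^ κ), if InBlock d i j then v j else 0

lemma blockSum_succ (v : Fin (2 ^ κ) → M) (d i : ℕ) :
    blockSum v (d + 1) i = blockSum v d (2 * i) + blockSum v d (2 * i + 1) := by
  rw [blockSum, blockSum, blockSum, ← sum_add_distrib]
  refine sum_congr rfl fun j _ => ?_
  simp only [inBlock_succ_iff]
  have := @inBlock_disjoint d i j
  split_ifs <;> simp_all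

lemma blockSum_zero (v : Fin (2 ^ κ) → M) (j : Fin (2 ^ κ)) : blockSum v 0 j = v j := by
  rw [blockSum, sum_eq_single j]
  · exact if_pos (inBlock_zero_iff.mpr rfl)
  · intro j' _ hj'
    rw [if_neg (fun h => hj' (Fin.ext (inBlock_zero_iff.mp h)))]
  · simp

lemma blockSum_top (v : Fin (2 ^ κ) → M) : blockSum v κ 0 = ∑ j, v j :=
  sum_congr rfl fun _ _ => if_pos inBlock_top

lemma fst_blockSum {N : Type*} [AddCommMonoid N] (v : Fin (2 ^ κ) → M × N) (d i : ℕ) :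
    (blockSum v d i).1 = blockSum (fun j => (v j).1) d i := by
  simp only [blockSum, Prod.fst_sum, apply_ite Prod.fst, Prod.fst_zero]

lemma snd_blockSum {N : Type*} [AddCommMonoid N] (v : Fin (2 ^ κ) → N × M) (d i : ℕ) :
    (blockSum v d i).2 = blockSum (fun j => (v j).2) d i := by
  simp only [blockSum, Prod.snd_sum, apply_ite Prod.snd, Prod.snd_zero]

def restrict (d i : ℕ) (v : Fin (2 ^ κ) → M) : Fin (2 ^ κ) → M :=
  fun j => if InBlock d i j then v j else 0

lemma blockSum_restrict {d i e i' : ℕ} (h : ∀ j, InBlock e i' j → InBlock d i j)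
    (v : Fin (2 ^ κ) → M) : blockSum (restrict d i v) e i' = blockSum v e i' := by
  refine sum_congr rfl fun j _ => ?_
  by_cases hj : InBlock e i' j
  · rw [if_pos hj, if_pos hj, restrict, if_pos (h j hj)]
  · rw [if_neg hj, if_neg hj]

lemma restrict_add_restrict {d i : ℕ} {v : Fin (2 ^ κ) → M}
    (hv : ∀ j : Fin (2 ^ κ), ¬ InBlock (d + 1) i j → v j = 0) :
    restrict d (2 * i) v + restrict d (2 * i + 1) v = v := by
  funext j
  have := @inBlock_disjoint d i j
  have := hv j
  simp only [restrict, Pi.add_apply, inBlock_succ_iff] at *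
  split_ifs <;> simp_all

end Blocks

section Tree

variable {κ : ℕ} (s : Fin (2 ^ κ) → Bool)

def Affected (d i : ℕ) : Prop := ∃ j : Fin (2 ^ κ), InBlock d i j ∧ s j = true

instance (d i : ℕ) : Decidable (Affected s d i) := by unfold Affected; infer_instance

variable {s}

lemma affected_top_of_ne (hs : s ≠ fun _ => false) : Affected s κ 0 := by
  obtain ⟨j, hj⟩ : ∃ j, s j = true := by
    by_contra! h
    exact hs (funext fun j => by simpa using h j)
  exact ⟨j, inBlock_top, hj⟩

lemma affected_succ_iff {d i : ℕ} :
    Affected s (d + 1) i ↔ Affected s d (2 * i) ∨ Affected s d (2 * i + 1) := by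
  simp only [Affected, inBlock_succ_iff, or_and_right, exists_or]

variable (s)

def stexAt (d i : ℕ) : ℕ :=
  ∑ e ∈ Icc 1 d, ∑ i' ∈ Ico (i * 2 ^ (d - e)) ((i + 1) * 2 ^ (d - e)),
    if Affected s e i' then 1 else 0

lemma stexAt_top : stexAt s κ 0 = stex κ s := by
  refine sum_congr rfl fun e _ => ?_
  rw [zero_mul, zero_add, one_mul, ← range_eq_Ico]
  simp only [Affected, InBlock, and_assoc]

lemma sum_Ico_block_succ {N : Type*} [AddCommMonoid N] (f : ℕ → N) (k i : ℕ) :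
    ∑ x ∈ Ico (i * 2 ^ (k + 1)) ((i + 1) * 2 ^ (k + 1)), f x =
      ∑ x ∈ Ico (2 * i * 2 ^ k) ((2 * i + 1) * 2 ^ k), f x +
        ∑ x ∈ Ico ((2 * i + 1) * 2 ^ k) ((2 * i + 1 + 1) * 2 ^ k), f x := by
  have h1 : i * 2 ^ (k + 1) = 2 * i * 2 ^ k := by ring
  have h2 : (i + 1) * 2 ^ (k + 1) = (2 * i + 1 + 1) * 2 ^ k := by ring
  rw [h1, h2, sum_Ico_consecutive _ (Nat.mul_le_mul_right _ (by omega))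
    (Nat.mul_le_mul_right _ (by omega))]

lemma stexAt_succ (d i : ℕ) :
    stexAt s (d + 1) i =
      stexAt s d (2 * i) + stexAt s d (2 * i + 1) + if Affected s (d + 1) i then 1 else 0 := by
  rw [stexAt, sum_Icc_succ_top (by omega), Nat.sub_self, pow_zero, mul_one, mul_one,
    Nat.Ico_succ_singleton, sum_singleton, stexAt, stexAt, ← sum_add_distrib]
  congr 1
  refine sum_congr rfl fun e he => ?_
  rw [Nat.sub_add_comm (mem_Icc.mp he).2, sum_Ico_block_succ]

def affectedLeaves (d i : ℕ) : ℕ := blockSum (fun j => if s j = true then 1 else 0) d i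

lemma affectedLeaves_top : affectedLeaves s κ 0 = #{j | s j = true} := by
  rw [affectedLeaves, blockSum_top, card_filter]

lemma affected_le_affectedLeaves_zero (i : ℕ) :
    (if Affected s 0 i then 1 else 0) ≤ affectedLeaves s 0 i := by
  split_ifs with h
  · obtain ⟨j, hj, hsj⟩ := h
    refine le_trans ?_ (single_le_sum (fun _ _ => Nat.zero_le _) (mem_univ j))
    simp [hj, hsj]
  · exact Nat.zero_le _

/-- The number of block sums of the left child of the node `(d + 1, i)` that are not determined
by those of the node itself. -/
def freeAt (d i : ℕ) : ℕ := if Affected s d (2 * i) ∧ Affected s d (2 * i + 1) then 2 else 1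

def freeSums : ℕ → ℕ → ℕ
  | 0, _ => 0
  | d + 1, i => freeAt s d i + freeSums d (2 * i) + freeSums d (2 * i + 1)

def freeSumLevels : ℕ → ℕ → ℕ
  | 0, _ => 0
  | d + 1, i => d * freeAt s d i + freeSumLevels d (2 * i) + freeSumLevels d (2 * i + 1)

lemma freeSums_add_one_le (d i : ℕ) : freeSums s d i + 1 ≤ 2 ^ d + stexAt s d i := by
  induction d generalizing i with
  | zero => simp [freeSums]
  | succ d ih =>
    have hl := ih (2 * i)
    have hr := ih (2 * i + 1)
    rw [freeSums, stexAt_succ, pow_succ, freeAt]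
    simp only [affected_succ_iff]
    by_cases hA : Affected s d (2 * i) <;> by_cases hB : Affected s d (2 * i + 1) <;>
      simp only [hA, hB, if_true, if_false, and_self, and_true, and_false, or_true, or_false]
        at hl hr ⊢ <;> omega

lemma freeSums_add_le_affectedLeaves (d i : ℕ) :
    freeSums s d i + 1 + (if Affected s d i then 1 else 0) ≤ 2 ^ d + affectedLeaves s d i := by
  induction d generalizing i with
  | zero =>
    have := affected_le_affectedLeaves_zero s i
    rw [freeSums, pow_zero]
    omega
  | succ d ih =>
    have hl := ih (2 * i)
    have hr := ih (2 * i + 1)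
    rw [freeSums, affectedLeaves, blockSum_succ, ← affectedLeaves, ← affectedLeaves,
      pow_succ, freeAt]
    simp only [affected_succ_iff]
    by_cases hA : Affected s d (2 * i) <;> by_cases hB : Affected s d (2 * i + 1) <;>
      simp only [hA, hB, if_true, if_false, and_self, and_true, and_false, or_true, or_false]
        at hl hr ⊢ <;> omega

lemma freeSumLevels_add (d i : ℕ) :
    freeSumLevels s d i + d * (if Affected s d i then 1 else 0) + d + 1 =
      2 ^ d + stexAt s d i := by
  induction d generalizing i with
  | zero => simp [freeSumLevels, stexAt]
  | succ d ih =>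
    have hl := ih (2 * i)
    have hr := ih (2 * i + 1)
    rw [freeSumLevels, stexAt_succ, pow_succ, freeAt]
    simp only [affected_succ_iff]
    by_cases hA : Affected s d (2 * i) <;> by_cases hB : Affected s d (2 * i + 1) <;>
      simp only [hA, hB, if_true, if_false, and_self, and_true, and_false, or_true, or_false]
        at hl hr ⊢ <;> omega

end Tree

section Solutions

open Classical

variable {κ : ℕ} {s : Fin (2 ^ κ) → Bool} {m : ℕ} {p : ℝ}

lemma blockSum_snd_eq_fst {v : Fin (2 ^ κ) → ℤ × ℤ} (hv : ∀ j, s j = false → (v j).2 = (v j).1)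
    {d c : ℕ} (hc : ¬ Affected s d c) : (blockSum v d c).2 = (blockSum v d c).1 := by
  rw [fst_blockSum, snd_blockSum]
  refine sum_congr rfl fun j _ => ?_
  split_ifs with hj
  · exact hv j (Bool.eq_false_iff.mpr fun hs => hc ⟨j, hj, hs⟩)
  · rfl

variable (s m p)

/-- `v j` stands for the pair `(L_j[ℓ_j], L_j[ℓ'_j])`, restricted to the block `(d, i)`, whose
block sums are `t`. The `ℓ'`-filter is only imposed on blocks where the tuples differ: on the
others `agree` makes the two block sums equal. -/
structure IsSolution (d i : ℕ) (t : ℤ × ℤ) (v : Fin (2 ^ κ) → ℤ × ℤ) : Prop where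
  support : ∀ j : Fin (2 ^ κ), ¬ InBlock d i j → v j = 0
  agree : ∀ j, s j = false → (v j).2 = (v j).1
  bounded : ∀ e < d, ∀ i', InBlock (d - e) i i' →
    (blockSum v e i').1 ∈ intRange (m * p ^ e) ∧
      (Affected s e i' → (blockSum v e i').2 ∈ intRange (m * p ^ e))
  sum_eq : blockSum v d i = t

noncomputable def solutions (d i : ℕ) (t : ℤ × ℤ) : Finset (Fin (2 ^ κ) → ℤ × ℤ) :=
  {v ∈ Fintype.piFinset fun _ => intRange m ×ˢ intRange m | IsSolution s m p d i t v}

variable {s m p}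

lemma IsSolution.restrict {d i c : ℕ} {t : ℤ × ℤ} {v : Fin (2 ^ κ) → ℤ × ℤ}
    (hv : IsSolution s m p (d + 1) i t v) (hc : InBlock 1 i c) :
    IsSolution s m p d c (blockSum v d c) (restrict d c v) where
  support j hj := if_neg hj
  agree j hj := by
    unfold KTree.restrict
    split_ifs
    · exact hv.agree j hj
    · rfl
  bounded e he i' hi' := by
    rw [blockSum_restrict (fun j => InBlock.trans he.le hi')]
    refine hv.bounded e (by omega) i' (InBlock.trans (e := d - e) (by omega) ?_ hi')
    rwa [show d + 1 - e - (d - e) = 1 by omega]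
  sum_eq := blockSum_restrict (fun _ h => h) v

lemma restrict_mem_solutions {d i c : ℕ} {t : ℤ × ℤ} {v : Fin (2 ^ κ) → ℤ × ℤ}
    (hv : v ∈ solutions s m p (d + 1) i t) (hc : InBlock 1 i c) :
    restrict d c v ∈ solutions s m p d c (blockSum v d c) := by
  rw [solutions, mem_filter, Fintype.mem_piFinset] at hv ⊢
  refine ⟨fun j => ?_, hv.2.restrict hc⟩
  unfold KTree.restrict
  split_ifs
  · exact hv.1 j
  · have h0 := zero_mem_intRange (Nat.cast_nonneg m : (0 : ℝ) ≤ m)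
    exact mem_product.mpr ⟨h0, h0⟩

variable (s m p) in
noncomputable def leftSums (d i : ℕ) (t : ℤ × ℤ) : Finset (ℤ × ℤ) :=
  (solutions s m p (d + 1) i t).image fun v => blockSum v d (2 * i)

lemma solutions_succ_subset (d i : ℕ) (t : ℤ × ℤ) :
    solutions s m p (d + 1) i t ⊆ (leftSums s m p d i t).biUnion fun u =>
      (solutions s m p d (2 * i) u ×ˢ solutions s m p d (2 * i + 1) (t - u)).image
        fun w => w.1 + w.2 := by
  intro v hv
  have hsol := (mem_filter.mp hv).2
  have hright : blockSum v d (2 * i + 1) = t - blockSum v d (2 * i) := by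
    rw [eq_sub_iff_add_eq', ← blockSum_succ, hsol.sum_eq]
  simp only [mem_biUnion, mem_image, mem_product]
  exact ⟨_, mem_image_of_mem _ hv, (restrict d (2 * i) v, restrict d (2 * i + 1) v),
    ⟨restrict_mem_solutions hv (inBlock_one_left i),
      hright ▸ restrict_mem_solutions hv (inBlock_one_right i)⟩,
    restrict_add_restrict hsol.support⟩

lemma card_solutions_succ_le (d i : ℕ) (t : ℤ × ℤ) :
    #(solutions s m p (d + 1) i t) ≤
      ∑ u ∈ leftSums s m p d i t,
        #(solutions s m p d (2 * i) u) * #(solutions s m p d (2 * i + 1) (t - u)) :=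
  (card_le_card (solutions_succ_subset d i t)).trans <| card_biUnion_le.trans <|
    sum_le_sum fun _ _ => card_image_le.trans (card_product _ _).le

lemma leftSum_mem {d i : ℕ} {t : ℤ × ℤ} {v : Fin (2 ^ κ) → ℤ × ℤ}
    (hv : v ∈ solutions s m p (d + 1) i t) :
    (blockSum v d (2 * i)).1 ∈ intRange (m * p ^ d) ∧
      (Affected s d (2 * i) → (blockSum v d (2 * i)).2 ∈ intRange (m * p ^ d)) :=
  (mem_filter.mp hv).2.bounded d (by omega) (2 * i)
    (by rw [Nat.add_sub_cancel_left]; exact inBlock_one_left i)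

lemma snd_sub_fst_leftSum {d i : ℕ} {t : ℤ × ℤ} {v : Fin (2 ^ κ) → ℤ × ℤ}
    (hv : v ∈ solutions s m p (d + 1) i t)
    (h : ¬ (Affected s d (2 * i) ∧ Affected s d (2 * i + 1))) :
    (blockSum v d (2 * i)).2 - (blockSum v d (2 * i)).1 =
      if Affected s d (2 * i) then t.2 - t.1 else 0 := by
  have hsol := (mem_filter.mp hv).2
  split_ifs with hl
  · have hr := blockSum_snd_eq_fst hsol.agree fun hr => h ⟨hl, hr⟩
    have hsum := hsol.sum_eq
    rw [blockSum_succ] at hsum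
    have h1 := congrArg Prod.fst hsum
    have h2 := congrArg Prod.snd hsum
    simp only [Prod.fst_add, Prod.snd_add] at h1 h2
    omega
  · rw [blockSum_snd_eq_fst hsol.agree hl, sub_self]

lemma card_leftSums_le (d i : ℕ) (t : ℤ × ℤ) :
    #(leftSums s m p d i t) ≤ #(intRange (m * p ^ d)) ^ freeAt s d i := by
  unfold freeAt
  split_ifs with h
  · rw [sq, ← card_product]
    refine card_le_card fun u hu => ?_
    obtain ⟨v, hv, rfl⟩ := mem_image.mp hu
    exact mem_product.mpr ⟨(leftSum_mem hv).1, (leftSum_mem hv).2 h.1⟩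
  · rw [pow_one]
    refine card_le_card_of_injOn Prod.fst (fun u hu => ?_) fun u hu u' hu' hfst => ?_
    · obtain ⟨v, hv, rfl⟩ := mem_image.mp hu
      exact (leftSum_mem hv).1
    · obtain ⟨v, hv, rfl⟩ := mem_image.mp hu
      obtain ⟨v', hv', rfl⟩ := mem_image.mp hu'
      have hdiff := snd_sub_fst_leftSum hv h
      have hdiff' := snd_sub_fst_leftSum hv' h
      exact Prod.ext hfst (by omega)

lemma card_solutions_zero_le_one (i : ℕ) (t : ℤ × ℤ) : #(solutions s m p 0 i t) ≤ 1 := by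
  refine card_le_one.mpr fun v hv v' hv' => funext fun j => ?_
  have hsol := (mem_filter.mp hv).2
  have hsol' := (mem_filter.mp hv').2
  by_cases hj : InBlock 0 i j
  · obtain rfl : (j : ℕ) = i := inBlock_zero_iff.mp hj
    rw [← blockSum_zero v, ← blockSum_zero v', hsol.sum_eq, hsol'.sum_eq]
  · rw [hsol.support j hj, hsol'.support j hj]

theorem card_solutions_le {a : ℝ} (ha : 0 ≤ a) (hp : 0 ≤ p) {d : ℕ}
    (hW : ∀ e < d, (#(intRange (m * p ^ e)) : ℝ) ≤ a * p ^ e) (i : ℕ) (t : ℤ × ℤ) :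
    (#(solutions s m p d i t) : ℝ) ≤ a ^ freeSums s d i * p ^ freeSumLevels s d i := by
  induction d generalizing i t with
  | zero =>
    simpa [freeSums, freeSumLevels] using card_solutions_zero_le_one (s := s) (m := m) (p := p) i t
  | succ d ih =>
    have ih' := ih fun e he => hW e (by omega)
    set BL := a ^ freeSums s d (2 * i) * p ^ freeSumLevels s d (2 * i)
    set BR := a ^ freeSums s d (2 * i + 1) * p ^ freeSumLevels s d (2 * i + 1)
    have hnode : (#(leftSums s m p d i t) : ℝ) ≤ (a * p ^ d) ^ freeAt s d i :=
      calc (#(leftSums s m p d i t) : ℝ) ≤ #(intRange (m * p ^ d)) ^ freeAt s d i := by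
            exact_mod_cast card_leftSums_le d i t
        _ ≤ (a * p ^ d) ^ freeAt s d i := pow_le_pow_left₀ (by positivity) (hW d (by omega)) _
    calc (#(solutions s m p (d + 1) i t) : ℝ)
        ≤ ∑ u ∈ leftSums s m p d i t,
            (#(solutions s m p d (2 * i) u) : ℝ) * #(solutions s m p d (2 * i + 1) (t - u)) := by
          exact_mod_cast card_solutions_succ_le d i t
      _ ≤ ∑ u ∈ leftSums s m p d i t, BL * BR :=
          sum_le_sum fun u _ => mul_le_mul (ih' _ _) (ih' _ _) (by positivity) (by positivity)
      _ = #(leftSums s m p d i t) * (BL * BR) := by rw [sum_const, nsmul_eq_mul]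
      _ ≤ (a * p ^ d) ^ freeAt s d i * (BL * BR) := by gcongr
      _ = a ^ freeSums s (d + 1) i * p ^ freeSumLevels s (d + 1) i := by
          rw [freeSums, freeSumLevels]
          ring

end Solutions

section Pairs

open Classical

variable {κ n m : ℕ} {p : ℝ} {s : Fin (2 ^ κ) → Bool} {ℓ ℓ' : Fin (2 ^ κ) → Fin n}

lemma isSolution_of_successful {L : Fin (2 ^ κ) → Fin n → ℤ} (hL : ∀ j c, L j c ∈ intRange m)
    (hℓ : Successful κ n m p L ℓ) (hℓ' : Successful κ n m p L ℓ')
    (hagree : ∀ j, s j = false → ℓ j = ℓ' j) :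
    IsSolution s m p κ 0 0 fun j => (L j (ℓ j), L j (ℓ' j)) where
  support j hj := absurd inBlock_top hj
  agree j hj := by rw [hagree j hj]
  bounded e he i' hi' := by
    have hi'κ : i' < 2 ^ (κ - e) := by simpa [InBlock] using hi'.2
    rw [fst_blockSum, snd_blockSum]
    rcases Nat.eq_zero_or_pos e with rfl | he0
    · rw [pow_zero, mul_one, blockSum_zero _ ⟨i', hi'κ⟩, blockSum_zero _ ⟨i', hi'κ⟩]
      exact ⟨hL _ _, fun _ => hL _ _⟩
    · have he' : e ∈ Icc 1 κ := mem_Icc.mpr ⟨he0, he.le⟩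
      exact ⟨hℓ.1 e he' i' hi'κ, fun _ => hℓ'.1 e he' i' hi'κ⟩
  sum_eq := by
    rw [blockSum_top]
    exact Prod.ext (by rw [Prod.fst_sum]; exact hℓ.2) (by rw [Prod.snd_sum]; exact hℓ'.2)

variable (ℓ ℓ') in
def usedEntries : Finset (Fin (2 ^ κ) × Fin n) := {q | q.2 = ℓ q.1 ∨ q.2 = ℓ' q.1}

lemma card_usedEntries (hδ : ∀ j, s j = true ↔ ℓ j ≠ ℓ' j) :
    #(usedEntries ℓ ℓ') = 2 ^ κ + #{j | s j = true} := by
  have hcol : ∀ j, #{c | c = ℓ j ∨ c = ℓ' j} = 1 + if s j = true then 1 else 0 := by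
    intro j
    have : ({c | c = ℓ j ∨ c = ℓ' j} : Finset (Fin n)) = {ℓ j, ℓ' j} := by ext; simp
    rw [this]
    by_cases hj : s j = true
    · rw [card_pair ((hδ j).mp hj), if_pos hj]
    · rw [not_not.mp (mt (hδ j).mpr hj), pair_eq_singleton, card_singleton, if_neg hj]
  calc #(usedEntries ℓ ℓ') = ∑ j, #{c | c = ℓ j ∨ c = ℓ' j} := by
        rw [usedEntries, card_filter, Fintype.sum_prod_type]
        simp only [card_filter]
    _ = ∑ j, (1 + if s j = true then 1 else 0) := sum_congr rfl fun j _ => hcol j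
    _ = _ := by rw [sum_add_distrib, card_filter]; simp

lemma card_successful_le (hδ : ∀ j, s j = true ↔ ℓ j ≠ ℓ' j) :
    Nat.card {L : Fin (2 ^ κ) → Fin n → ↥(intRange (m : ℝ)) //
        Successful κ n m p (fun i j => (L i j : ℤ)) ℓ ∧
          Successful κ n m p (fun i j => (L i j : ℤ)) ℓ'} ≤
      #(intRange (m : ℝ)) ^ #(usedEntries ℓ ℓ')ᶜ * #(solutions s m p κ 0 0) := by
  rw [Nat.card_eq_fintype_card, Fintype.card_subtype]
  let F (L : Fin (2 ^ κ) → Fin n → ↥(intRange (m : ℝ))) :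
      (↥(usedEntries ℓ ℓ')ᶜ → ↥(intRange (m : ℝ))) × (Fin (2 ^ κ) → ℤ × ℤ) :=
    (fun q => L q.1.1 q.1.2, fun j => ((L j (ℓ j) : ℤ), (L j (ℓ' j) : ℤ)))
  have hagree : ∀ j, s j = false → ℓ j = ℓ' j := fun j hj =>
    not_not.mp (mt (hδ j).mpr (by simp [hj]))
  calc _ ≤ #(univ ×ˢ solutions s m p κ 0 0) := by
        refine card_le_card_of_injOn F (fun L hL => ?_) fun L _ L' _ hLL' => ?_
        · obtain ⟨hℓ, hℓ'⟩ := (mem_filter.mp hL).2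
          refine mem_product.mpr ⟨mem_univ _, mem_filter.mpr ⟨?_,
            isSolution_of_successful (fun j c => (L j c).2) hℓ hℓ' hagree⟩⟩
          exact Fintype.mem_piFinset.mpr fun j => mem_product.mpr ⟨(L j _).2, (L j _).2⟩
        · obtain ⟨hfree, hpair⟩ := Prod.ext_iff.mp hLL'
          funext j c
          by_cases hc : c = ℓ j
          · exact hc ▸ Subtype.ext (congrArg Prod.fst (congrFun hpair j))
          by_cases hc' : c = ℓ' j
          · exact hc' ▸ Subtype.ext (congrArg Prod.snd (congrFun hpair j))
          exact congrFun hfree ⟨(j, c), by simp [usedEntries, hc, hc']⟩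
    _ = _ := by rw [card_product, card_univ, Fintype.card_fun, Fintype.card_coe,
        Fintype.card_coe]

theorem expPair_le (hδ : ∀ j, s j = true ↔ ℓ j ≠ ℓ' j) :
    expPair κ n m p ℓ ℓ' ≤
      #(solutions s m p κ 0 0) / (#(intRange (m : ℝ)) : ℝ) ^ (2 ^ κ + #{j | s j = true}) := by
  have hM : (0 : ℝ) < #(intRange (m : ℝ)) :=
    Nat.cast_pos.mpr (card_pos.mpr ⟨0, zero_mem_intRange (Nat.cast_nonneg m)⟩)
  have htotal : Fintype.card (Fin (2 ^ κ) → Fin n → ↥(intRange (m : ℝ))) =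
      #(intRange (m : ℝ)) ^ (#(usedEntries ℓ ℓ')ᶜ + #(usedEntries ℓ ℓ')) := by
    rw [card_compl_add_card, Fintype.card_fun, Fintype.card_fun, Fintype.card_coe,
      Fintype.card_prod, ← pow_mul, mul_comm]
  rw [expPair, htotal, ← card_usedEntries hδ, Nat.cast_pow,
    div_le_div_iff₀ (pow_pos hM _) (pow_pos hM _)]
  calc _ ≤ ((#(intRange (m : ℝ)) ^ #(usedEntries ℓ ℓ')ᶜ * #(solutions s m p κ 0 0) : ℕ) : ℝ) *
        (#(intRange (m : ℝ)) : ℝ) ^ #(usedEntries ℓ ℓ') := by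
        gcongr
        exact_mod_cast card_successful_le hδ
    _ = _ := by push_cast; ring

end Pairs

lemma mul_pow_mul_pow_div_le {m c p q : ℝ} {A P N K : ℕ} (hm : 1 ≤ m) (hc : 1 ≤ c) (hq : 1 ≤ q)
    (hp : 0 < p) (hAN : A + 2 ≤ N) (hAK : A ≤ P + 2 * K + 2) :
    (c * m) ^ A * p ^ P / m ^ N ≤
      p ^ (P + 2 * K + 2) / (m * p ^ (K + 1)) ^ 2 * (q * c) ^ (P + 2 * K + 2) := by
  obtain ⟨r, rfl⟩ := Nat.exists_eq_add_of_le hAN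
  have hm0 : 0 < m := by linarith
  have hpow : p ^ (P + 2 * K + 2) / (m * p ^ (K + 1)) ^ 2 = p ^ P / m ^ 2 := by
    field_simp
    ring
  have hc' : c ^ A ≤ (q * c) ^ (P + 2 * K + 2) :=
    (pow_le_pow_left₀ (by linarith) (le_mul_of_one_le_left (by linarith) hq) A).trans
      (pow_le_pow_right₀ (one_le_mul_of_one_le_of_one_le hq hc) hAK)
  rw [hpow]
  calc (c * m) ^ A * p ^ P / m ^ (A + 2 + r) = c ^ A * (p ^ P / m ^ 2) / m ^ r := by
        field_simp
        ring
    _ ≤ c ^ A * (p ^ P / m ^ 2) := div_le_self (by positivity) (one_le_pow₀ hm)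
    _ ≤ p ^ P / m ^ 2 * (q * c) ^ (P + 2 * K + 2) := by
        rw [mul_comm]
        gcongr

end KTree

open KTree

theorem kTree_pair_expectation_bound_general
    (κ n m : ℕ) (hm : 0 < m)
    (p : ℝ) (hp0 : 0 < p) (hp1 : p ≤ 1)
    (h4 : p < 1 / 30)
    (s : Fin (2 ^ κ) → Bool) (hs : s ≠ fun _ => false)
    (σ : ℕ) (hσ : σ = stex κ s)
    (ℓ ℓ' : Fin (2 ^ κ) → Fin n)
    (hδ : ∀ i, s i = true ↔ ℓ i ≠ ℓ' i) :
    expPair κ n m p ℓ ℓ' ≤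
      p ^ (2 ^ κ + σ + 1) / ((m : ℝ) * p ^ (κ + 1)) ^ 2 *
        ((1 - p)⁻¹ * (1 + 30 / ((m : ℝ) * p ^ κ))) ^ (2 ^ κ + σ + 1) := by
  set c := 1 + 30 / ((m : ℝ) * p ^ κ)
  have hroot := affected_top_of_ne hs
  have hleaves := freeSums_add_le_affectedLeaves s κ 0
  have hstex := freeSums_add_one_le s κ 0
  have hlevels := freeSumLevels_add s κ 0
  rw [if_pos hroot, affectedLeaves_top] at hleaves
  rw [if_pos hroot, stexAt_top, ← hσ] at hlevels
  rw [stexAt_top, ← hσ] at hstex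
  have hW : ∀ e < κ, (#(intRange (m * p ^ e)) : ℝ) ≤ c * m * p ^ e := fun e he =>
    card_intRange_mul_pow_le hm hp0 hp1 (by norm_num) he.le
  have hE : 2 ^ κ + σ + 1 = freeSumLevels s κ 0 + 2 * κ + 2 := by omega
  rw [hE]
  calc expPair κ n m p ℓ ℓ'
      ≤ #(solutions s m p κ 0 0) / (#(intRange (m : ℝ)) : ℝ) ^ (2 ^ κ + #{j | s j = true}) :=
        expPair_le hδ
    _ ≤ (c * m) ^ freeSums s κ 0 * p ^ freeSumLevels s κ 0 / m ^ (2 ^ κ + #{j | s j = true}) :=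
        div_le_div₀ (by positivity) (card_solutions_le (by positivity) hp0.le hW 0 0)
          (by positivity)
          (pow_le_pow_left₀ (Nat.cast_nonneg m) (by exact_mod_cast le_card_intRange m) _)
    _ ≤ _ := mul_pow_mul_pow_div_le (by exact_mod_cast hm)
        (le_add_of_nonneg_right (by positivity)) (one_le_inv₀ (by linarith) |>.mpr (by linarith))
        hp0 (by omega) (by omega)

theorem kTree_pair_expectation_bound
    (κ n m : ℕ) (hκ : 1 ≤ κ) (hn : 0 < n) (hm : 0 < m)
    (p : ℝ) (hp0 : 0 < p) (hp1 : p ≤ 1)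
    (h3 : (30 : ℝ) < (m : ℝ) * p ^ (κ - 1)) (h4 : p < 1 / 30)
    (s : Fin (2 ^ κ) → Bool) (hs : s ≠ fun _ => false)
    (σ : ℕ) (hσ : σ = stex κ s)
    (ℓ ℓ' : Fin (2 ^ κ) → Fin n)
    (hδ : ∀ i, s i = true ↔ ℓ i ≠ ℓ' i) :
    expPair κ n m p ℓ ℓ' ≤
      p ^ (2 ^ κ + σ + 1) / ((m : ℝ) * p ^ (κ + 1)) ^ 2 *
        ((1 - p)⁻¹ * (1 + 30 / ((m : ℝ) * p ^ κ))) ^ (2 ^ κ + σ + 1) :=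
  kTree_pair_expectation_bound_general κ n m hm p hp0 hp1 h4 s hs σ hσ ℓ ℓ' hδ
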